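/- (Energy Bound.) Let Φ be an m×d real matrix, r a positive integer, and δ ≥ 0, and suppose Φ verifies the upper restricted isometry inequality ‖Φx‖₂ ≤ √(1+δ) ‖x‖₂ for every r-sparse vector x ∈ ℝ^d. Then, for every vector x ∈ ℝ^d, ‖Φx‖₂ ≤ √(1+δ) (‖x‖₂ + ‖x‖₁/√r). -/

import Mathlib

/-! Let `T` be a set of `r` largest coordinates of `x` in absolute value and split
`x = x_T + x_{Tᶜ}`. Every tail coordinate is at most `‖x_T‖₁ / r`, so `√r ‖x_{Tᶜ}‖_∞ ≤ ‖x_T‖₁ / √r`.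
Hence, for subadditive `F` with `F ≤ C ‖·‖₂` on `r`-sparse vectors, the invariant
`F x ≤ C (min (‖x‖₂, √r ‖x‖_∞) + ‖x‖₁ / √r)` passes from the tail to `x`: the block `x_T` costs
`C ‖x_T‖₂`, the tail's `√r ‖·‖_∞` term is paid by `‖x_T‖₁ / √r`, and the `ℓ1` charges add up to
`‖x‖₁`. Induction on the size of the support concludes. -/

/-- The Euclidean (ℓ2) norm of a finitely-indexed real vector. -/
noncomputable def l2 {ι : Type*} [Fintype ι] (v : ι → ℝ) : ℝ :=
  Real.sqrt (∑ i, (v i) ^ 2)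

/-- The ℓ1 norm of a finitely-indexed real vector. -/
noncomputable def l1 {ι : Type*} [Fintype ι] (v : ι → ℝ) : ℝ :=
  ∑ i, |v i|

/-- A vector is `s`-sparse if it has at most `s` nonzero coordinates. -/
def Sparse {d : ℕ} (s : ℕ) (v : Fin d → ℝ) : Prop :=
  {i | v i ≠ 0}.ncard ≤ s

open Finset Function

theorem Finset.exists_card_eq_forall_le {ι β : Type*} [Fintype ι] [DecidableEq ι] [LinearOrder β]
    (f : ι → β) {r : ℕ} (hr : r ≤ Fintype.card ι) :
    ∃ T : Finset ι, #T = r ∧ ∀ i ∈ T, ∀ j ∉ T, f j ≤ f i := by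
  induction r with
  | zero => exact ⟨∅, rfl, by simp⟩
  | succ r ih =>
    obtain ⟨T, hcard, htop⟩ := ih (by omega)
    have hne : Tᶜ.Nonempty := by
      rw [← card_pos, card_compl]
      omega
    obtain ⟨k, hk, hkmax⟩ := exists_max_image Tᶜ f hne
    rw [mem_compl] at hk
    refine ⟨insert k T, by rw [card_insert_of_notMem hk, hcard], ?_⟩
    intro i hi j hj
    rw [mem_insert, not_or] at hj
    rcases mem_insert.1 hi with rfl | hi
    · exact hkmax j (mem_compl.2 hj.2)
    · exact htop i hi j hj.2

section Norms

variable {ι : Type*} [Fintype ι]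

theorem l2_eq_norm_toLp (v : ι → ℝ) : l2 v = ‖WithLp.toLp 2 v‖ := by
  simp [l2, EuclideanSpace.norm_eq]

theorem l2_add_le (u v : ι → ℝ) : l2 (u + v) ≤ l2 u + l2 v := by
  simpa only [l2_eq_norm_toLp, WithLp.toLp_add] using norm_add_le _ _

theorem l2_indicator_le (s : Set ι) (v : ι → ℝ) : l2 (s.indicator v) ≤ l2 v := by
  refine Real.sqrt_le_sqrt (sum_le_sum fun i _ => ?_)
  by_cases hi : i ∈ s <;> simp [hi, sq_nonneg]

theorem l2_le_sqrt_mul_norm {v : ι → ℝ} {k : ℕ} (hv : (support v).ncard ≤ k) :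
    l2 v ≤ √k * ‖v‖ := by
  classical
  have hcard : #{i | v i ≠ 0} ≤ k := by
    simpa [Set.ncard_eq_toFinset_card'] using hv
  have hsum : ∑ i, v i ^ 2 ≤ k * ‖v‖ ^ 2 := calc
    ∑ i, v i ^ 2 = ∑ i with v i ≠ 0, v i ^ 2 := by
      simp only [← sum_filter_ne_zero (s := univ) (f := fun i => v i ^ 2), ne_eq, pow_eq_zero_iff,
        two_ne_zero, not_false_eq_true]
    _ ≤ #{i | v i ≠ 0} • ‖v‖ ^ 2 := sum_le_card_nsmul _ _ _ fun i _ => by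
      rw [← sq_abs, ← Real.norm_eq_abs]
      exact pow_le_pow_left₀ (norm_nonneg _) (norm_le_pi_norm v i) 2
    _ ≤ k * ‖v‖ ^ 2 := by
      rw [nsmul_eq_mul]
      gcongr
  calc l2 v ≤ √(k * ‖v‖ ^ 2) := Real.sqrt_le_sqrt hsum
    _ = √k * ‖v‖ := by rw [Real.sqrt_mul (Nat.cast_nonneg k), Real.sqrt_sq (norm_nonneg v)]

theorem l1_nonneg (v : ι → ℝ) : 0 ≤ l1 v := sum_nonneg fun i _ => abs_nonneg (v i)

theorem l1_indicator_add_l1_indicator_compl (s : Set ι) (v : ι → ℝ) :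
    l1 (s.indicator v) + l1 (sᶜ.indicator v) = l1 v := by
  rw [l1, l1, l1, ← sum_add_distrib]
  refine sum_congr rfl fun i _ => ?_
  by_cases hi : i ∈ s <;> simp [hi]

theorem l1_indicator_finset (T : Finset ι) (v : ι → ℝ) :
    l1 ((T : Set ι).indicator v) = ∑ i ∈ T, |v i| := by
  rw [l1, ← sum_indicator_subset _ (subset_univ T)]
  refine sum_congr rfl fun i _ => ?_
  by_cases hi : i ∈ T <;> simp [hi]

end Norms

section TopSet

variable {ι : Type*} [Fintype ι] {T : Finset ι} {v : ι → ℝ}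

theorem card_mul_abs_le_l1_indicator (htop : ∀ i ∈ T, ∀ j ∉ T, |v j| ≤ |v i|) {j : ι}
    (hj : j ∉ T) : #T * |v j| ≤ l1 ((T : Set ι).indicator v) := by
  rw [l1_indicator_finset, ← nsmul_eq_mul]
  exact card_nsmul_le_sum _ _ _ fun i hi => htop i hi j hj

theorem sqrt_card_mul_norm_indicator_compl_le (hT : 0 < #T)
    (htop : ∀ i ∈ T, ∀ j ∉ T, |v j| ≤ |v i|) :
    √(#T) * ‖(T : Set ι)ᶜ.indicator v‖ ≤ l1 ((T : Set ι).indicator v) / √(#T) := by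
  have hT' : (0 : ℝ) < #T := by exact_mod_cast hT
  have hnorm : ‖(T : Set ι)ᶜ.indicator v‖ ≤ l1 ((T : Set ι).indicator v) / #T := by
    refine (pi_norm_le_iff_of_nonneg (div_nonneg (l1_nonneg _) hT'.le)).2 fun j => ?_
    by_cases hj : j ∈ T
    · simpa [hj] using div_nonneg (l1_nonneg _) hT'.le
    · rw [Set.indicator_of_mem (by simpa using hj), Real.norm_eq_abs, le_div_iff₀ hT', mul_comm]
      exact card_mul_abs_le_l1_indicator htop hj
  calc √(#T) * ‖(T : Set ι)ᶜ.indicator v‖ ≤ √(#T) * (l1 ((T : Set ι).indicator v) / #T) := by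
        gcongr
    _ = l1 ((T : Set ι).indicator v) / √(#T) := by
        field_simp
        rw [Real.sq_sqrt hT'.le, mul_comm]

theorem ncard_support_indicator_compl_lt (hT : 0 < #T)
    (htop : ∀ i ∈ T, ∀ j ∉ T, |v j| ≤ |v i|) (hlt : #T < (support v).ncard) :
    (support ((T : Set ι)ᶜ.indicator v)).ncard < (support v).ncard := by
  obtain ⟨j, hjv, hjT⟩ : ∃ j ∈ support v, j ∉ T := by
    by_contra! h
    have := Set.ncard_le_ncard (show support v ⊆ T from h)
    rw [Set.ncard_coe_finset] at this
    omega
  obtain ⟨i, hi⟩ := card_pos.1 hT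
  have hiv : i ∈ support v :=
    abs_pos.1 ((abs_pos.2 hjv).trans_le (htop i hi j hjT))
  rw [Set.support_indicator]
  exact Set.ncard_lt_ncard
    ((Set.ssubset_iff_of_subset Set.inter_subset_right).2 ⟨i, hiv, fun h => h.1 hi⟩)

end TopSet

section EnergyBound

variable {ι : Type*} [Fintype ι] {F : (ι → ℝ) → ℝ} {r : ℕ} {C : ℝ}

-- `‖x‖` is the sup norm of `x : ι → ℝ`.
theorem le_mul_min_add_l1_div_sqrt (hadd : ∀ u v, F (u + v) ≤ F u + F v) (hr : 0 < r)
    (hC : 0 ≤ C) (hsparse : ∀ v, (support v).ncard ≤ r → F v ≤ C * l2 v) (x : ι → ℝ) :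
    F x ≤ C * (min (l2 x) (√r * ‖x‖) + l1 x / √r) := by
  classical
  induction hn : (support x).ncard using Nat.strong_induction_on generalizing x with
  | _ n ih =>
  subst hn
  rcases le_or_gt (support x).ncard r with hsmall | hsmall
  · calc F x ≤ C * l2 x := hsparse x hsmall
      _ ≤ C * (min (l2 x) (√r * ‖x‖) + l1 x / √r) := by
        rw [min_eq_left (l2_le_sqrt_mul_norm hsmall)]
        gcongr
        exact le_add_of_nonneg_right (div_nonneg (l1_nonneg x) (Real.sqrt_nonneg _))
  have hrcard : r ≤ Fintype.card ι :=
    hsmall.le.trans (by simpa using Set.ncard_le_card (support x))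
  obtain ⟨T, rfl, htop⟩ := exists_card_eq_forall_le (fun i => |x i|) hrcard
  set u := (T : Set ι).indicator x
  set y := (T : Set ι)ᶜ.indicator x
  have hu_sparse : (support u).ncard ≤ #T :=
    (Set.ncard_le_ncard Set.support_indicator_subset).trans_eq (Set.ncard_coe_finset T)
  have hu : l2 u ≤ min (l2 x) (√(#T) * ‖x‖) := by
    refine le_min (l2_indicator_le _ _) ((l2_le_sqrt_mul_norm hu_sparse).trans ?_)
    gcongr
    exact (pi_norm_le_iff_of_nonneg (norm_nonneg x)).2 fun i =>
      (norm_indicator_le_norm_self x i).trans (norm_le_pi_norm x i)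
  have hy : F y ≤ C * (√(#T) * ‖y‖ + l1 y / √(#T)) :=
    (ih _ (ncard_support_indicator_compl_lt hr htop hsmall) y rfl).trans
      (by gcongr; exact min_le_right _ _)
  calc F x = F (u + y) := by rw [Set.indicator_self_add_compl]
    _ ≤ F u + F y := hadd u y
    _ ≤ C * l2 u + C * (l1 u / √(#T) + l1 y / √(#T)) := by
      gcongr
      · exact hsparse u hu_sparse
      · exact hy.trans (by gcongr; exact sqrt_card_mul_norm_indicator_compl_le hr htop)
    _ = C * (l2 u + l1 x / √(#T)) := by
      rw [← l1_indicator_add_l1_indicator_compl T x]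
      ring
    _ ≤ C * (min (l2 x) (√(#T) * ‖x‖) + l1 x / √(#T)) := by gcongr

theorem le_mul_l2_add_l1_div_sqrt (hadd : ∀ u v, F (u + v) ≤ F u + F v) (hr : 0 < r)
    (hC : 0 ≤ C) (hsparse : ∀ v, (support v).ncard ≤ r → F v ≤ C * l2 v) (x : ι → ℝ) :
    F x ≤ C * (l2 x + l1 x / √r) :=
  (le_mul_min_add_l1_div_sqrt hadd hr hC hsparse x).trans (by gcongr; exact min_le_left _ _)

end EnergyBound

theorem stmt9_general (m d r : ℕ) (hr : 0 < r) (δ : ℝ)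
    (Φ : Matrix (Fin m) (Fin d) ℝ)
    (hupper : ∀ v : Fin d → ℝ, Sparse r v →
      l2 (Φ.mulVec v) ≤ Real.sqrt (1 + δ) * l2 v)
    (x : Fin d → ℝ) :
    l2 (Φ.mulVec x) ≤ Real.sqrt (1 + δ) * (l2 x + l1 x / Real.sqrt r) :=
  le_mul_l2_add_l1_div_sqrt (F := fun v => l2 (Φ.mulVec v))
    (fun u v => by simpa only [Matrix.mulVec_add] using l2_add_le _ _) hr (Real.sqrt_nonneg _)
    hupper x

/-- **Energy Bound.** If `‖Φx‖₂ ≤ √(1+δ) ‖x‖₂` for every `r`-sparse `x`,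
then for every vector `x`, `‖Φx‖₂ ≤ √(1+δ) (‖x‖₂ + ‖x‖₁/√r)`. -/
theorem stmt9 (m d r : ℕ) (hr : 0 < r) (δ : ℝ) (hδ : 0 ≤ δ)
    (Φ : Matrix (Fin m) (Fin d) ℝ)
    (hupper : ∀ v : Fin d → ℝ, Sparse r v →
      l2 (Φ.mulVec v) ≤ Real.sqrt (1 + δ) * l2 v)
    (x : Fin d → ℝ) :
    l2 (Φ.mulVec x) ≤ Real.sqrt (1 + δ) * (l2 x + l1 x / Real.sqrt r) :=
  stmt9_general m d r hr δ Φ hupper x
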